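/- Let X be a simplicial complex, Γ a finite collection of subcomplexes of X, F a field, and k an integer with -1 ≤ k ≤ |Γ| - 2. Suppose that for every subcollection Γ' ⊆ Γ: (1h) H̃_{k-|Γ'|}(⋂Γ', F) = 0 whenever 1 ≤ |Γ'| ≤ k+1, and (2h) H̃_{|Γ'|-2}(⋃Γ', F) = 0 whenever k+2 ≤ |Γ'| ≤ |Γ|. Then ⋂Γ ≠ ∅. -/

import Mathlib

open Finset

/-- The faces of an abstract simplicial complex: a set of nonempty finite sets of
vertices, closed under taking nonempty subsets. -/
def IsComplex {V : Type*} (S : Set (Finset V)) : Prop :=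
  (∀ s ∈ S, s.Nonempty) ∧ ∀ s ∈ S, ∀ t ⊆ s, t.Nonempty → t ∈ S

/-- The nerve of a collection `Γ` of (sub)complexes, as a set of finsets of the index
type: the simplices are the nonempty subcollections with a common face. -/
def nerveC {ι V : Type*} (Γ : ι → Set (Finset V)) : Set (Finset ι) :=
  {σ | σ.Nonempty ∧ (⋂ i ∈ (σ : Finset ι), Γ i).Nonempty}

/-- Simplicial `n`-chains (dimension `n`, i.e. on vertex sets of cardinality `n+1`)
on the vertex type `V`, with coefficients in `A`. -/
abbrev Chains (A V : Type*) [AddCommGroup A] [LinearOrder V] (n : ℕ) : Type _ :=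
  {s : Finset V // s.card = n + 1} →₀ A

variable (R : Type*) [CommRing R] (A : Type*) [AddCommGroup A] [Module R A]
variable (V : Type*) [LinearOrder V]

/-- The simplicial boundary map, with the usual alternating signs determined by the
linear order on the vertices. -/
noncomputable def bdry (n : ℕ) : Chains A V (n + 1) →ₗ[R] Chains A V n :=
  Finsupp.lsum R fun s =>
    ∑ v ∈ (s : Finset V).attach,
      ((-1 : ℤ) ^ (((s : Finset V).filter (fun w => w < v.1)).card)) •
        (Finsupp.lsingle (R := R) ⟨(s : Finset V).erase v.1, by
          rw [Finset.card_erase_of_mem v.2, s.2]; rfl⟩)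

/-- The augmentation map on `0`-chains. -/
noncomputable def aug : Chains A V 0 →ₗ[R] A :=
  Finsupp.lsum R fun _ => LinearMap.id

/-- Reduced cycles: kernel of the boundary map, resp. of the augmentation in degree 0. -/
noncomputable def cycles : (n : ℕ) → Submodule R (Chains A V n)
  | 0 => LinearMap.ker (aug R A V)
  | (n + 1) => LinearMap.ker (bdry R A V n)

/-- Chains supported on the simplices belonging to `S`. -/
def chainsIn (S : Set (Finset V)) (n : ℕ) : Submodule R (Chains A V n) :=
  Finsupp.supported A R {s : {s : Finset V // s.card = n + 1} | ↑s ∈ S}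

/-- Reduced cycles of the complex `S`. -/
noncomputable def cyclesIn (S : Set (Finset V)) (n : ℕ) : Submodule R (Chains A V n) :=
  cycles R A V n ⊓ chainsIn R A V S n

/-- Boundaries of chains of the complex `S`. -/
noncomputable def boundariesIn (S : Set (Finset V)) (n : ℕ) : Submodule R (Chains A V n) :=
  Submodule.map (bdry R A V n) (chainsIn R A V S (n + 1))

/-- Reduced simplicial homology of the complex `S` in degree `n ≥ 0`,
with coefficients in the `R`-module `A`. -/
noncomputable abbrev redH (S : Set (Finset V)) (n : ℕ) : Type _ :=
  (cyclesIn R A V S n) ⧸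
    (Submodule.comap (cyclesIn R A V S n).subtype (boundariesIn R A V S n))

/-- Vanishing of the reduced homology of `S` in degree `n : ℤ`, with the convention
that `H̃₋₁(S) = 0` iff `S` is nonempty (and trivial vanishing below degree `-1`). -/
def RedHVanish (S : Set (Finset V)) (n : ℤ) : Prop :=
  if n < -1 then True
  else if n = -1 then S.Nonempty
  else Subsingleton (redH R A V S n.toNat)

open scoped Classical in
/-- The dimension (rank) of the reduced homology of `S` in degree `n : ℤ`; in degree `-1`
it is `0` iff `S` is nonempty, in accordance with the convention. -/
noncomputable def redHRank (S : Set (Finset V)) (n : ℤ) : Cardinal :=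
  if n < -1 then 0
  else if n = -1 then (if S.Nonempty then (0 : Cardinal) else 1)
  else Module.rank R (redH R A V S n.toNat)


/-!
Suppose `⋂ Γ = ∅`, and choose for every face `f` an index `pick f` with `f ∉ Γ (pick f)`. Order the
index set, let `n = |Γ|`, and attach to each `σ ⊆ Γ` the complex
`N σ = (⋂ of σ without its n - k - 1 least members) ∩ ⋃ σᶜ`. Repeated Mayer–Vietoris turns (1h) and
(2h) into `H̃_{n-2-|σ|}(N σ) = 0`, and `N` shrinks as `σ` grows. Starting from vertices of the `N σ`
with `|σ| = n - 1`, weighted so that their augmentations form the Čech coboundary of a constant, one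
fills Čech coboundaries by chains one dimension up: `c_d σ ∈ C_d(N σ)` with `∂ c_{d+1} = δ c_d`.
Splitting chains according to `pick` is a contracting homotopy of the Čech complex `σ ↦ C_d(⋃ σᶜ)`;
descending the double complex with it shows that the augmentation of some `c_0 σ` vanishes,
contradicting its choice.
-/

theorem sum_sum_erase_eq_zero_of_antisymm {α M : Type*} [AddCommGroup M] [DecidableEq α]
    (s : Finset α) (f : α → α → M) (hf : ∀ i ∈ s, ∀ j ∈ s, i ≠ j → f i j + f j i = 0) :
    ∑ i ∈ s, ∑ j ∈ s.erase i, f i j = 0 := by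
  rw [Finset.sum_sigma']
  refine Finset.sum_involution (fun p _ => ⟨p.2, p.1⟩) ?_ ?_ ?_ (fun _ _ => rfl)
  all_goals
    rintro ⟨i, j⟩ hp
    simp only [Finset.mem_sigma, Finset.mem_erase] at hp
  · exact hf i hp.1 j hp.2.2 (Ne.symm hp.2.1)
  · exact fun _ h => hp.2.1 (congrArg Sigma.fst h)
  · simpa using ⟨hp.2.2, Ne.symm hp.2.1, hp.1⟩

section Signs

variable {ι : Type*} [LinearOrder ι]

def insertSign (σ : Finset ι) (i : ι) : ℤ := (-1) ^ #{j ∈ σ | j < i}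

theorem insertSign_mul_self (σ : Finset ι) (i : ι) : insertSign σ i * insertSign σ i = 1 := by
  rw [insertSign, ← mul_pow, neg_one_mul, neg_neg, one_pow]

theorem insertSign_empty (i : ι) : insertSign ∅ i = 1 := by
  simp [insertSign]

theorem insertSign_mul_insertSign_insert {σ : Finset ι} {i j : ι} (hi : i ∉ σ) (hj : j ∉ σ)
    (hij : i ≠ j) :
    insertSign σ i * insertSign (insert i σ) j = -(insertSign σ j * insertSign (insert j σ) i) := by
  have hcard : ∀ {a : ι}, a ∉ σ → ∀ b,
      #{x ∈ insert a σ | x < b} = #{x ∈ σ | x < b} + if a < b then 1 else 0 := by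
    intro a ha b
    rw [Finset.filter_insert]
    split_ifs
    · exact Finset.card_insert_of_notMem (fun h => ha (Finset.mem_filter.1 h).1)
    · rfl
  simp only [insertSign, ← pow_add, hcard hi, hcard hj]
  rcases hij.lt_or_gt with h | h <;> simp only [h, not_lt_of_gt h, if_true, if_false] <;> ring

theorem insertSign_erase_add_insertSign_erase {σ : Finset ι} {i v : ι} (hi : i ∉ σ) (hv : v ∈ σ) :
    insertSign σ i * insertSign (insert i (σ.erase v)) v
      + insertSign (σ.erase v) v * insertSign (σ.erase v) i = 0 := by
  set ρ := σ.erase v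
  have hvρ : v ∉ ρ := Finset.notMem_erase v σ
  have hiρ : i ∉ ρ := fun h => hi (Finset.mem_of_mem_erase h)
  have hswap := insertSign_mul_insertSign_insert hvρ hiρ (ne_of_mem_of_not_mem hv hi)
  rw [Finset.insert_erase hv] at hswap
  linear_combination (insertSign ρ v * insertSign (insert i ρ) v) * hswap
    - (insertSign σ i * insertSign (insert i ρ) v) * insertSign_mul_self ρ v
    - (insertSign ρ v * insertSign ρ i) * insertSign_mul_self (insert i ρ) v

end Signs

section Cech

variable {ι : Type*} [LinearOrder ι]

variable [Fintype ι] {M N : Type*} [AddCommGroup M] [AddCommGroup N]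

def cech (c : Finset ι → M) (σ : Finset ι) : M :=
  ∑ i ∈ σᶜ, insertSign σ i • c (insert i σ)

theorem cech_mem {S : Type*} [SetLike S M] [AddSubgroupClass S M] (p : S)
    {c : Finset ι → M} {σ : Finset ι} (h : ∀ i ∉ σ, c (insert i σ) ∈ p) : cech c σ ∈ p :=
  sum_mem fun i hi => zsmul_mem (h i (Finset.mem_compl.1 hi)) _

theorem cech_cech (c : Finset ι → M) (σ : Finset ι) : cech (cech c) σ = 0 := by
  have hexpand : ∀ i ∈ σᶜ, insertSign σ i • cech c (insert i σ)
      = ∑ j ∈ σᶜ.erase i,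
          (insertSign σ i * insertSign (insert i σ) j) • c (insert j (insert i σ)) := by
    intro i _
    simp only [cech, Finset.smul_sum, Finset.compl_insert, mul_smul]
  rw [cech, Finset.sum_congr rfl hexpand]
  refine sum_sum_erase_eq_zero_of_antisymm _ _ fun i hi j hj hij => ?_
  rw [Finset.mem_compl] at hi hj
  rw [Finset.insert_comm j i, insertSign_mul_insertSign_insert hi hj hij, neg_smul, neg_add_cancel]

theorem map_cech {G : Type*} [FunLike G M N] [AddMonoidHomClass G M N] (f : G)
    (c : Finset ι → M) (σ : Finset ι) : f (cech c σ) = cech (fun τ => f (c τ)) σ := by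
  simp only [cech, map_sum, map_zsmul]

theorem cech_sub (c c' : Finset ι → M) (σ : Finset ι) :
    cech (fun τ => c τ - c' τ) σ = cech c σ - cech c' σ := by
  simp only [cech, smul_sub, Finset.sum_sub_distrib]

theorem cech_congr {c c' : Finset ι → M} {σ : Finset ι}
    (h : ∀ i ∉ σ, c (insert i σ) = c' (insert i σ)) : cech c σ = cech c' σ :=
  Finset.sum_congr rfl fun i hi => by rw [h i (Finset.mem_compl.1 hi)]

theorem cech_univ_erase (c : Finset ι → M) (i : ι) :
    cech c (Finset.univ.erase i) = insertSign (Finset.univ.erase i) i • c Finset.univ := by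
  rw [cech, Finset.compl_erase, Finset.compl_univ, insert_empty_eq, Finset.sum_singleton,
    Finset.insert_erase (Finset.mem_univ i)]

def cechHomotopy (π : ι → M →+ M) (c : Finset ι → M) (σ : Finset ι) : M :=
  ∑ v ∈ σ, insertSign (σ.erase v) v • π v (c (σ.erase v))

theorem cech_cechHomotopy_add_cechHomotopy_cech (π : ι → M →+ M) (hπ : ∀ x, ∑ v, π v x = x)
    (c : Finset ι → M) (σ : Finset ι) :
    cech (cechHomotopy π c) σ + cechHomotopy π (cech c) σ = c σ := by
  have hleft : ∀ i ∈ σᶜ, insertSign σ i • cechHomotopy π c (insert i σ) = π i (c σ)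
      + ∑ v ∈ σ, (insertSign σ i * insertSign (insert i (σ.erase v)) v)
          • π v (c (insert i (σ.erase v))) := by
    intro i hi
    have hi : i ∉ σ := Finset.mem_compl.1 hi
    rw [cechHomotopy, Finset.sum_insert hi, Finset.erase_insert hi, smul_add, smul_smul,
      insertSign_mul_self, one_smul, Finset.smul_sum]
    refine congrArg _ (Finset.sum_congr rfl fun v hv => ?_)
    rw [Finset.erase_insert_of_ne (ne_of_mem_of_not_mem hv hi).symm, smul_smul]
  have hright : ∀ v ∈ σ, insertSign (σ.erase v) v • π v (cech c (σ.erase v)) = π v (c σ)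
      + ∑ i ∈ σᶜ, (insertSign (σ.erase v) v * insertSign (σ.erase v) i)
          • π v (c (insert i (σ.erase v))) := by
    intro v hv
    rw [cech, Finset.compl_erase, Finset.sum_insert (Finset.notMem_compl.2 hv),
      Finset.insert_erase hv, map_add, smul_add, map_zsmul, smul_smul, insertSign_mul_self,
      one_smul, map_sum, Finset.smul_sum]
    simp only [map_zsmul, smul_smul]
  rw [cech, Finset.sum_congr rfl hleft, cechHomotopy, Finset.sum_congr rfl hright,
    Finset.sum_add_distrib, Finset.sum_add_distrib, Finset.sum_comm (s := σᶜ), add_add_add_comm,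
    ← Finset.sum_add_distrib, Finset.sum_compl_add_sum, hπ]
  conv_rhs => rw [← add_zero (c σ)]
  refine congrArg _ (Finset.sum_eq_zero fun v hv => ?_)
  rw [← Finset.sum_add_distrib]
  refine Finset.sum_eq_zero fun i hi => ?_
  rw [← add_smul, insertSign_erase_add_insertSign_erase (Finset.mem_compl.1 hi) hv, zero_smul]

theorem cech_cechHomotopy (π : ι → M →+ M) (hπ : ∀ x, ∑ v, π v x = x) {c : Finset ι → M}
    {σ : Finset ι} (hc : ∀ v ∈ σ, cech c (σ.erase v) = 0) : cech (cechHomotopy π c) σ = c σ := by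
  rw [← cech_cechHomotopy_add_cechHomotopy_cech π hπ c σ, left_eq_add, cechHomotopy]
  exact Finset.sum_eq_zero fun v hv => by rw [hc v hv, map_zero, smul_zero]

end Cech

section Faces

variable {α M : Type*} [LinearOrder α] [AddCommGroup M]

def faceSum (g : Finset α → M) (s : Finset α) : M :=
  ∑ v ∈ s, insertSign (s.erase v) v • g (s.erase v)

theorem faceSum_faceSum (g : Finset α → M) (s : Finset α) : faceSum (faceSum g) s = 0 := by
  have hexpand : ∀ v ∈ s, insertSign (s.erase v) v • faceSum g (s.erase v)
      = ∑ w ∈ s.erase v, (insertSign (s.erase v) v * insertSign ((s.erase v).erase w) w)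
          • g ((s.erase v).erase w) := by
    intro v _
    simp only [faceSum, Finset.smul_sum, mul_smul]
  rw [faceSum, Finset.sum_congr rfl hexpand]
  refine sum_sum_erase_eq_zero_of_antisymm _ _ fun v hv w hw hvw => ?_
  set ρ := (s.erase v).erase w
  have hvρ : v ∉ ρ := fun h => (Finset.mem_erase.1 (Finset.mem_of_mem_erase h)).1 rfl
  have hwρ : w ∉ ρ := fun h => (Finset.mem_erase.1 h).1 rfl
  have hcomm : (s.erase w).erase v = ρ := Finset.erase_right_comm
  have hv' : s.erase v = insert w ρ :=
    (Finset.insert_erase (Finset.mem_erase.2 ⟨hvw.symm, hw⟩)).symm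
  have hw' : s.erase w = insert v ρ := by
    rw [← hcomm, Finset.insert_erase (Finset.mem_erase.2 ⟨hvw, hv⟩)]
  rw [hcomm, hv', hw', ← add_smul, mul_comm (insertSign (insert w ρ) v),
    mul_comm (insertSign (insert v ρ) w), insertSign_mul_insertSign_insert hwρ hvρ hvw.symm,
    neg_add_cancel, zero_smul]

theorem faceSum_const_of_card_eq_one (a : M) {t : Finset α} (ht : #t = 1) :
    faceSum (fun _ => a) t = a := by
  obtain ⟨w, rfl⟩ := Finset.card_eq_one.1 ht
  simp [faceSum, insertSign_empty]

end Faces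

section Chains

variable {R A V}

noncomputable def singleChain (d : ℕ) (t : Finset V) (a : A) : Chains A V d :=
  if h : #t = d + 1 then Finsupp.single ⟨t, h⟩ a else 0

theorem singleChain_of_card {d : ℕ} {t : Finset V} (h : #t = d + 1) (a : A) :
    singleChain d t a = Finsupp.single ⟨t, h⟩ a :=
  dif_pos h

theorem bdry_single {d : ℕ} (s : {t : Finset V // #t = d + 1 + 1}) (a : A) :
    bdry R A V d (Finsupp.single s a) = faceSum (fun t => singleChain d t a) (s : Finset V) := by
  unfold bdry
  rw [Finsupp.lsum_single, LinearMap.sum_apply, faceSum]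
  conv_rhs => rw [← Finset.sum_attach]
  refine Finset.sum_congr rfl fun v _ => ?_
  rw [LinearMap.smul_apply, Finsupp.lsingle_apply, singleChain_of_card, insertSign,
    Finset.filter_erase, Finset.erase_eq_of_notMem (s := {j ∈ (s : Finset V) | j < v.1}) (by simp)]

theorem bdry_singleChain {d : ℕ} (t : Finset V) (a : A) :
    bdry R A V d (singleChain (d + 1) t a) = faceSum (fun t => singleChain d t a) t := by
  by_cases h : #t = d + 1 + 1
  · rw [singleChain_of_card h, bdry_single]
  · rw [singleChain, dif_neg h, map_zero, faceSum]
    refine (Finset.sum_eq_zero fun v hv => ?_).symm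
    rw [singleChain, dif_neg (fun h' => h (by rw [← Finset.card_erase_add_one hv, h'])), smul_zero]

theorem bdry_bdry {d : ℕ} (x : Chains A V (d + 1 + 1)) :
    bdry R A V d (bdry R A V (d + 1) x) = 0 := by
  induction x using Finsupp.induction_linear with
  | zero => rw [map_zero, map_zero]
  | add f g hf hg => rw [map_add, map_add, hf, hg, add_zero]
  | single s a =>
    rw [bdry_single, faceSum, map_sum]
    simp only [map_zsmul, bdry_singleChain]
    exact faceSum_faceSum _ (s : Finset V)

theorem aug_singleChain_singleton (v : V) (a : A) : aug R A V (singleChain 0 {v} a) = a := by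
  rw [singleChain_of_card (Finset.card_singleton v), aug, Finsupp.lsum_single, LinearMap.id_apply]

theorem aug_bdry (x : Chains A V 1) : aug R A V (bdry R A V 0 x) = 0 := by
  induction x using Finsupp.induction_linear with
  | zero => rw [map_zero, map_zero]
  | add f g hf hg => rw [map_add, map_add, hf, hg, add_zero]
  | single s a =>
    rw [bdry_single, faceSum, map_sum, ← faceSum_faceSum (fun _ => a) (s : Finset V), faceSum]
    refine Finset.sum_congr rfl fun v hv => ?_
    have hcard : #((s : Finset V).erase v) = 1 := by rw [Finset.card_erase_of_mem hv, s.2]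
    obtain ⟨w, hw⟩ := Finset.card_eq_one.1 hcard
    rw [map_zsmul, faceSum_const_of_card_eq_one a hcard, hw, aug_singleChain_singleton]

theorem bdry_mem_cycles (d : ℕ) (x : Chains A V (d + 1)) : bdry R A V d x ∈ cycles R A V d := by
  cases d with
  | zero => exact aug_bdry x
  | succ d => exact bdry_bdry x

variable {S T : Set (Finset V)} {d : ℕ}

theorem chainsIn_mono (h : S ⊆ T) : chainsIn R A V S d ≤ chainsIn R A V T d :=
  Finsupp.supported_mono fun _ hs => h hs

theorem chainsIn_union : chainsIn R A V (S ∪ T) d = chainsIn R A V S d ⊔ chainsIn R A V T d :=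
  Finsupp.supported_union _ _

theorem chainsIn_inter : chainsIn R A V (S ∩ T) d = chainsIn R A V S d ⊓ chainsIn R A V T d :=
  Finsupp.supported_inter _ _

theorem chainsIn_empty : chainsIn R A V ∅ d = ⊥ :=
  Finsupp.supported_empty

theorem singleChain_mem_chainsIn {t : Finset V} (ht : t ∈ S) (a : A) :
    singleChain d t a ∈ chainsIn R A V S d := by
  unfold singleChain
  split_ifs
  · exact Finsupp.single_mem_supported R a ht
  · exact zero_mem _

theorem bdry_mem_chainsIn (hS : IsComplex S) {x : Chains A V (d + 1)}
    (hx : x ∈ chainsIn R A V S (d + 1)) : bdry R A V d x ∈ chainsIn R A V S d := by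
  rw [← Finsupp.sum_single x, map_finsuppSum]
  refine Submodule.sum_mem _ fun s hs => ?_
  dsimp only
  rw [bdry_single, faceSum]
  refine Submodule.sum_mem _ fun v hv => zsmul_mem (singleChain_mem_chainsIn ?_ _) _
  refine hS.2 _ (hx hs) _ (Finset.erase_subset _ _) ?_
  rw [← Finset.card_pos, Finset.card_erase_of_mem hv, s.2]
  omega

end Chains

section Complexes

variable {α ι : Type*} {S T : Set (Finset α)} {Γ : ι → Set (Finset α)}

theorem IsComplex.exists_singleton_mem (hS : IsComplex S) (hne : S.Nonempty) :
    ∃ v, {v} ∈ S := by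
  obtain ⟨s, hs⟩ := hne
  obtain ⟨v, hv⟩ := hS.1 s hs
  exact ⟨v, hS.2 s hs {v} (Finset.singleton_subset_iff.2 hv) (Finset.singleton_nonempty v)⟩

theorem IsComplex.inter (hS : IsComplex S) (hT : IsComplex T) : IsComplex (S ∩ T) :=
  ⟨fun s hs => hS.1 s hs.1, fun s hs t hts ht => ⟨hS.2 s hs.1 t hts ht, hT.2 s hs.2 t hts ht⟩⟩

theorem IsComplex.biUnion (hΓ : ∀ i, IsComplex (Γ i)) (σ : Finset ι) :
    IsComplex (⋃ i ∈ σ, Γ i) := by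
  refine ⟨fun s hs => ?_, fun s hs t hts ht => ?_⟩ <;>
    obtain ⟨i, hi, hs⟩ := Set.mem_iUnion₂.1 hs
  · exact (hΓ i).1 s hs
  · exact Set.mem_iUnion₂.2 ⟨i, hi, (hΓ i).2 s hs t hts ht⟩

theorem IsComplex.biInter_inter (hΓ : ∀ i, IsComplex (Γ i)) (hS : IsComplex S) (τ : Finset ι) :
    IsComplex ((⋂ i ∈ τ, Γ i) ∩ S) := by
  refine ⟨fun s hs => hS.1 s hs.2, fun s hs t hts ht => ⟨?_, hS.2 s hs.2 t hts ht⟩⟩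
  exact Set.mem_iInter₂.2 fun i hi => (hΓ i).2 s (Set.mem_iInter₂.1 hs.1 i hi) t hts ht

end Complexes

section MayerVietoris

variable {R A V} {S T : Set (Finset V)}

theorem redHVanish_of_lt {n : ℤ} (h : n < -1) : RedHVanish R A V S n := by
  simp [RedHVanish, h]

theorem redHVanish_neg_one_iff : RedHVanish R A V S (-1) ↔ S.Nonempty := by
  simp [RedHVanish]

theorem redHVanish_natCast_iff {d : ℕ} :
    RedHVanish R A V S d ↔ cyclesIn R A V S d ≤ boundariesIn R A V S d := by
  rw [RedHVanish, if_neg (by omega), if_neg (by omega), Int.toNat_natCast,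
    Submodule.Quotient.subsingleton_iff, Submodule.comap_subtype_eq_top]

theorem boundariesIn_mono {d : ℕ} (h : S ⊆ T) : boundariesIn R A V S d ≤ boundariesIn R A V T d :=
  Submodule.map_mono (chainsIn_mono h)

theorem add_mem_boundariesIn_union {d : ℕ} {a b x : Chains A V d}
    (vS : cyclesIn R A V S d ≤ boundariesIn R A V S d)
    (vT : cyclesIn R A V T d ≤ boundariesIn R A V T d)
    (ha : a - x ∈ cyclesIn R A V S d) (hb : b + x ∈ cyclesIn R A V T d) :
    a + b ∈ boundariesIn R A V (S ∪ T) d := by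
  rw [show a + b = (a - x) + (b + x) by abel]
  exact add_mem (boundariesIn_mono Set.subset_union_left (vS ha))
    (boundariesIn_mono Set.subset_union_right (vT hb))

theorem cyclesIn_union_le_zero (hS : IsComplex S) (hT : IsComplex T) (hST : (S ∩ T).Nonempty)
    (vS : cyclesIn R A V S 0 ≤ boundariesIn R A V S 0)
    (vT : cyclesIn R A V T 0 ≤ boundariesIn R A V T 0) :
    cyclesIn R A V (S ∪ T) 0 ≤ boundariesIn R A V (S ∪ T) 0 := by
  rintro z ⟨hz, hzST⟩
  rw [chainsIn_union] at hzST
  obtain ⟨a, ha, b, hb, rfl⟩ := Submodule.mem_sup.1 hzST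
  obtain ⟨p, hp⟩ := (hS.inter hT).exists_singleton_mem hST
  have hx := singleChain_mem_chainsIn (R := R) (d := 0) hp (aug R A V a)
  rw [chainsIn_inter] at hx
  have hxa := aug_singleChain_singleton (R := R) p (aug R A V a)
  refine add_mem_boundariesIn_union vS vT ⟨?_, sub_mem ha hx.1⟩ ⟨?_, add_mem hb hx.2⟩
  · change aug R A V (a - _) = 0
    rw [map_sub, hxa, sub_self]
  · change aug R A V (b + _) = 0
    rw [map_add, hxa, add_comm, ← map_add]
    exact hz

theorem cyclesIn_union_le_succ (hS : IsComplex S) (hT : IsComplex T) {e : ℕ}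
    (vST : cyclesIn R A V (S ∩ T) e ≤ boundariesIn R A V (S ∩ T) e)
    (vS : cyclesIn R A V S (e + 1) ≤ boundariesIn R A V S (e + 1))
    (vT : cyclesIn R A V T (e + 1) ≤ boundariesIn R A V T (e + 1)) :
    cyclesIn R A V (S ∪ T) (e + 1) ≤ boundariesIn R A V (S ∪ T) (e + 1) := by
  rintro z ⟨hz, hzST⟩
  rw [chainsIn_union] at hzST
  obtain ⟨a, ha, b, hb, rfl⟩ := Submodule.mem_sup.1 hzST
  have hz : bdry R A V e a + bdry R A V e b = 0 := by rw [← map_add]; exact hz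
  have hcyc : bdry R A V e a ∈ cyclesIn R A V (S ∩ T) e := by
    refine ⟨bdry_mem_cycles e a, ?_⟩
    rw [chainsIn_inter]
    refine ⟨bdry_mem_chainsIn hS ha, ?_⟩
    rw [eq_neg_of_add_eq_zero_left hz]
    exact neg_mem (bdry_mem_chainsIn hT hb)
  obtain ⟨x, hx, hxa⟩ := vST hcyc
  rw [chainsIn_inter] at hx
  refine add_mem_boundariesIn_union vS vT ⟨?_, sub_mem ha hx.1⟩ ⟨?_, add_mem hb hx.2⟩
  · change bdry R A V e (a - x) = 0
    rw [map_sub, hxa, sub_self]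
  · change bdry R A V e (b + x) = 0
    rw [map_add, hxa, add_comm, hz]

theorem RedHVanish.union (hS : IsComplex S) (hT : IsComplex T) {d : ℤ}
    (vS : RedHVanish R A V S d) (vT : RedHVanish R A V T d)
    (vST : RedHVanish R A V (S ∩ T) (d - 1)) : RedHVanish R A V (S ∪ T) d := by
  rcases lt_trichotomy d (-1) with hd | rfl | hd
  · exact redHVanish_of_lt hd
  · rw [redHVanish_neg_one_iff] at vS ⊢
    exact vS.mono Set.subset_union_left
  obtain ⟨e, rfl⟩ : ∃ e : ℕ, d = e := ⟨d.toNat, by omega⟩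
  rw [redHVanish_natCast_iff] at vS vT ⊢
  cases e with
  | zero =>
    rw [Nat.cast_zero, zero_sub, redHVanish_neg_one_iff] at vST
    exact cyclesIn_union_le_zero hS hT vST vS vT
  | succ e =>
    rw [Nat.cast_succ, add_sub_cancel_right, redHVanish_natCast_iff] at vST
    exact cyclesIn_union_le_succ hS hT vST vS vT

end MayerVietoris

section Families

variable {R A V} {ι : Type*} [DecidableEq ι] {Γ : ι → Set (Finset V)}

theorem redHVanish_biInter_inter_biUnion (hΓ : ∀ i, IsComplex (Γ i)) {k : ℤ}
    (h1 : ∀ τ : Finset ι, τ.Nonempty → RedHVanish R A V (⋂ i ∈ τ, Γ i) (k - #τ))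
    {σ : Finset ι} (hσ : σ.Nonempty) (τ : Finset ι) (hτσ : Disjoint τ σ) :
    RedHVanish R A V ((⋂ i ∈ τ, Γ i) ∩ ⋃ i ∈ σ, Γ i) (k - 1 - #τ) := by
  have hinter : ∀ τ j, j ∉ τ → RedHVanish R A V ((⋂ i ∈ τ, Γ i) ∩ Γ j) (k - 1 - #τ) := by
    intro τ j hj
    have h := h1 (insert j τ) (Finset.insert_nonempty j τ)
    rwa [Finset.card_insert_of_notMem hj, Finset.set_biInter_insert, Set.inter_comm,
      Nat.cast_succ, sub_add_eq_sub_sub_swap] at h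
  induction hσ using Finset.Nonempty.cons_induction generalizing τ with
  | singleton j =>
    rw [Finset.set_biUnion_singleton]
    exact hinter τ j (Finset.disjoint_singleton_right.1 hτσ)
  | cons j σ hj hσ ih =>
    rw [Finset.cons_eq_insert, Finset.disjoint_insert_right] at hτσ
    rw [Finset.cons_eq_insert]
    have hunion : (⋂ i ∈ τ, Γ i) ∩ ⋃ i ∈ insert j σ, Γ i
        = ((⋂ i ∈ τ, Γ i) ∩ Γ j) ∪ ((⋂ i ∈ τ, Γ i) ∩ ⋃ i ∈ σ, Γ i) := by
      rw [Finset.set_biUnion_insert, Set.inter_union_distrib_left]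
    have hcap : ((⋂ i ∈ τ, Γ i) ∩ Γ j) ∩ ((⋂ i ∈ τ, Γ i) ∩ ⋃ i ∈ σ, Γ i)
        = (⋂ i ∈ insert j τ, Γ i) ∩ ⋃ i ∈ σ, Γ i := by
      rw [Finset.set_biInter_insert]
      ext f
      simp only [Set.mem_inter_iff]
      tauto
    have hcard : k - 1 - #(insert j τ) = k - 1 - #τ - 1 := by
      rw [Finset.card_insert_of_notMem hτσ.1, Nat.cast_succ, sub_add_eq_sub_sub]
    rw [hunion]
    refine RedHVanish.union (IsComplex.biInter_inter hΓ (hΓ j) τ)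
      (IsComplex.biInter_inter hΓ (IsComplex.biUnion hΓ σ) τ) (hinter τ j hτσ.1) (ih τ hτσ.2) ?_
    rw [hcap, ← hcard]
    exact ih (insert j τ) (Finset.disjoint_insert_left.2 ⟨hj, hτσ.2⟩)

end Families

section DropLeast

variable {ι : Type*} [LinearOrder ι] {m : ℕ}

def dropLeast (m : ℕ) (σ : Finset ι) : Finset ι := {y ∈ σ | m ≤ #{x ∈ σ | x < y}}

theorem dropLeast_subset (σ : Finset ι) : dropLeast m σ ⊆ σ := Finset.filter_subset _ _

theorem dropLeast_mono {σ σ' : Finset ι} (h : σ ⊆ σ') : dropLeast m σ ⊆ dropLeast m σ' := by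
  intro y hy
  rw [dropLeast, Finset.mem_filter] at hy ⊢
  exact ⟨h hy.1, hy.2.trans (Finset.card_le_card (Finset.filter_subset_filter _ h))⟩

theorem card_dropLeast (m : ℕ) (σ : Finset ι) : #(dropLeast m σ) = #σ - m := by
  induction σ using Finset.induction_on_max with
  | empty => simp [dropLeast]
  | insert a s ha ih =>
    have has : a ∉ s := fun h => lt_irrefl a (ha a h)
    have hbelow : ∀ y ∈ s, {x ∈ insert a s | x < y} = {x ∈ s | x < y} := fun y hy =>
      by rw [Finset.filter_insert, if_neg (not_lt_of_gt (ha y hy))]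
    have htop : {x ∈ insert a s | x < a} = s := by
      rw [Finset.filter_insert, if_neg (lt_irrefl a), Finset.filter_true_of_mem ha]
    have hrest : {y ∈ s | m ≤ #{x ∈ insert a s | x < y}} = dropLeast m s :=
      Finset.filter_congr fun y hy => by rw [hbelow y hy]
    rw [dropLeast, Finset.filter_insert, htop, hrest, Finset.card_insert_of_notMem has]
    split_ifs with h
    · rw [Finset.card_insert_of_notMem (fun h' => has (dropLeast_subset s h')), ih]
      omega
    · rw [ih]
      omega

end DropLeast

section MixedPiece

variable {α ι : Type*} [Fintype ι] [LinearOrder ι]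

-- Removing the *least* members of `σ` is what makes `mixedPiece Γ m` antitone in `σ`.
def mixedPiece (Γ : ι → Set (Finset α)) (m : ℕ) (σ : Finset ι) : Set (Finset α) :=
  (⋂ i ∈ dropLeast m σ, Γ i) ∩ ⋃ i ∈ σᶜ, Γ i

theorem mixedPiece_insert_subset (Γ : ι → Set (Finset α)) (m : ℕ) (σ : Finset ι) (i : ι) :
    mixedPiece Γ m (insert i σ) ⊆ mixedPiece Γ m σ := by
  refine Set.inter_subset_inter (Set.biInter_subset_biInter_left ?_)
    (Set.biUnion_subset_biUnion_left ?_)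
  · exact fun j hj => dropLeast_mono (Finset.subset_insert i σ) hj
  · exact fun j hj => Finset.compl_subset_compl.2 (Finset.subset_insert i σ) hj

variable {R A V} {Γ : ι → Set (Finset V)}

theorem redHVanish_mixedPiece (hΓ : ∀ i, IsComplex (Γ i)) {k : ℤ}
    (hk : k + 1 ≤ Fintype.card ι)
    (h1 : ∀ τ : Finset ι, τ.Nonempty → RedHVanish R A V (⋂ i ∈ τ, Γ i) (k - #τ))
    (h2 : ∀ ρ : Finset ι, k + 2 ≤ #ρ → RedHVanish R A V (⋃ i ∈ ρ, Γ i) (#ρ - 2))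
    (σ : Finset ι) :
    RedHVanish R A V (mixedPiece Γ (Fintype.card ι - k - 1).toNat σ) (Fintype.card ι - 2 - #σ) := by
  have hcompl : (#σᶜ : ℤ) = Fintype.card ι - #σ := by
    rw [Finset.card_compl, Nat.cast_sub (Finset.card_le_univ σ)]
  have hdrop : (#(dropLeast (Fintype.card ι - k - 1).toNat σ) : ℤ)
      = max (#σ - (Fintype.card ι - k - 1)) 0 := by
    rw [card_dropLeast]
    omega
  rw [mixedPiece]
  by_cases hlarge : k + 2 ≤ #σᶜ
  · have hempty : dropLeast (Fintype.card ι - k - 1).toNat σ = ∅ :=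
      Finset.card_eq_zero.1 (by omega)
    simp only [hempty, Finset.notMem_empty, Set.iInter_of_empty, Set.iInter_univ, Set.univ_inter]
    convert h2 σᶜ hlarge using 1
    omega
  rcases σᶜ.eq_empty_or_nonempty with hσ | hσ
  · exact redHVanish_of_lt (by rw [hσ, Finset.card_empty] at hcompl; omega)
  · convert redHVanish_biInter_inter_biUnion hΓ h1 hσ
      (dropLeast (Fintype.card ι - k - 1).toNat σ)
      (Finset.disjoint_of_subset_left (dropLeast_subset σ) disjoint_compl_right) using 1
    have := hσ.card_pos
    omega

end MixedPiece

section Zigzag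

variable {R A V} {ι : Type*} [Fintype ι] [LinearOrder ι]

noncomputable def zigzag (c₀ : Finset ι → Chains A V 0)
    (fill : (d : ℕ) → Finset ι → Chains A V d → Chains A V (d + 1)) :
    (d : ℕ) → Finset ι → Chains A V d
  | 0 => c₀
  | d + 1 => fun σ => fill d σ (cech (zigzag c₀ fill d) σ)

variable {N : Finset ι → Set (Finset V)} {c₀ : Finset ι → Chains A V 0}
  {fill : (d : ℕ) → Finset ι → Chains A V d → Chains A V (d + 1)} {a : A}

theorem zigzag_spec (hN : ∀ σ i, N (insert i σ) ⊆ N σ)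
    (hc₀ : ∀ σ, #σ + 1 = Fintype.card ι →
      c₀ σ ∈ chainsIn R A V (N σ) 0 ∧ aug R A V (c₀ σ) = cech (fun _ => a) σ)
    (hfill : ∀ d σ z, #σ + d + 2 = Fintype.card ι → z ∈ cyclesIn R A V (N σ) d →
      fill d σ z ∈ chainsIn R A V (N σ) (d + 1) ∧ bdry R A V d (fill d σ z) = z) (d : ℕ) :
    (∀ σ, #σ + d + 1 = Fintype.card ι → zigzag c₀ fill d σ ∈ chainsIn R A V (N σ) d) ∧
    (∀ σ, #σ + d + 2 = Fintype.card ι → cech (zigzag c₀ fill d) σ ∈ cyclesIn R A V (N σ) d) := by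
  have hcech_mem : ∀ {d} (c : Finset ι → Chains A V d),
      (∀ σ, #σ + d + 1 = Fintype.card ι → c σ ∈ chainsIn R A V (N σ) d) →
      ∀ σ, #σ + d + 2 = Fintype.card ι → cech c σ ∈ chainsIn R A V (N σ) d :=
    fun c hc σ hσ => cech_mem _ fun i hi =>
      chainsIn_mono (hN σ i) (hc _ (by rw [Finset.card_insert_of_notMem hi]; omega))
  induction d with
  | zero =>
    refine ⟨fun σ hσ => (hc₀ σ hσ).1, fun σ hσ => ⟨?_, hcech_mem _ (fun σ hσ => (hc₀ σ hσ).1) σ hσ⟩⟩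
    change aug R A V (cech c₀ σ) = 0
    rw [map_cech, ← cech_cech (fun _ => a) σ]
    exact cech_congr fun i hi => (hc₀ _ (by rw [Finset.card_insert_of_notMem hi]; omega)).2
  | succ d ih =>
    have hmem : ∀ σ, #σ + (d + 1) + 1 = Fintype.card ι →
        zigzag c₀ fill (d + 1) σ ∈ chainsIn R A V (N σ) (d + 1) :=
      fun σ hσ => (hfill d σ _ (by omega) (ih.2 σ (by omega))).1
    refine ⟨hmem, fun σ hσ => ⟨?_, hcech_mem _ hmem σ hσ⟩⟩
    change bdry R A V d (cech (zigzag c₀ fill (d + 1)) σ) = 0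
    rw [map_cech, ← cech_cech (zigzag c₀ fill d) σ]
    refine cech_congr fun i hi => (hfill d _ _ ?_ (ih.2 _ ?_)).2 <;>
      rw [Finset.card_insert_of_notMem hi] <;> omega

theorem exists_zigzag (hN : ∀ σ i, N (insert i σ) ⊆ N σ) (hNc : ∀ σ, IsComplex (N σ))
    (hNv : ∀ σ, RedHVanish R A V (N σ) (Fintype.card ι - 2 - #σ)) (a : A) :
    ∃ c : (d : ℕ) → Finset ι → Chains A V d,
      (∀ d σ, #σ + d + 1 = Fintype.card ι → c d σ ∈ chainsIn R A V (N σ) d) ∧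
      (∀ σ, #σ + 1 = Fintype.card ι → aug R A V (c 0 σ) = cech (fun _ => a) σ) ∧
      (∀ d σ, #σ + d + 2 = Fintype.card ι → bdry R A V d (c (d + 1) σ) = cech (c d) σ) := by
  classical
  have hvertex : ∀ σ, #σ + 1 = Fintype.card ι → ∃ v, {v} ∈ N σ := fun σ hσ =>
    (hNc σ).exists_singleton_mem (redHVanish_neg_one_iff.1 (by convert hNv σ using 1; omega))
  have hfill : ∀ d σ z, #σ + d + 2 = Fintype.card ι → z ∈ cyclesIn R A V (N σ) d →
      ∃ y ∈ chainsIn R A V (N σ) (d + 1), bdry R A V d y = z := fun d σ z hσ hz =>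
    (redHVanish_natCast_iff.1 (by convert hNv σ using 1; omega)) hz
  let c₀ σ := if h : ∃ v, {v} ∈ N σ then singleChain 0 {h.choose} (cech (fun _ => a) σ) else 0
  let fill d σ z :=
    if h : ∃ y ∈ chainsIn R A V (N σ) (d + 1), bdry R A V d y = z then h.choose else 0
  have hc₀ : ∀ σ, #σ + 1 = Fintype.card ι →
      c₀ σ ∈ chainsIn R A V (N σ) 0 ∧ aug R A V (c₀ σ) = cech (fun _ => a) σ := by
    intro σ hσ
    simp only [c₀, dif_pos (hvertex σ hσ)]
    exact ⟨singleChain_mem_chainsIn (hvertex σ hσ).choose_spec _, aug_singleChain_singleton _ _⟩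
  have hfill' : ∀ d σ z, #σ + d + 2 = Fintype.card ι → z ∈ cyclesIn R A V (N σ) d →
      fill d σ z ∈ chainsIn R A V (N σ) (d + 1) ∧ bdry R A V d (fill d σ z) = z := by
    intro d σ z hσ hz
    simp only [fill, dif_pos (hfill d σ z hσ hz)]
    exact (hfill d σ z hσ hz).choose_spec
  have hspec := zigzag_spec hN hc₀ hfill'
  exact ⟨zigzag c₀ fill, fun d => (hspec d).1, fun σ hσ => (hc₀ σ hσ).2,
    fun d σ hσ => (hfill' d σ _ hσ ((hspec d).2 σ hσ)).2⟩

end Zigzag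

section Descent

variable {R A V} {ι : Type*} [LinearOrder ι] {Γ : ι → Set (Finset V)} (pick : Finset V → ι)

def pickPart (d : ℕ) (v : ι) : Chains A V d →+ Chains A V d :=
  Finsupp.filterAddHom fun s => pick s = v

theorem pickPart_mem {pick : Finset V → ι} (hpick : ∀ f, f ∉ Γ (pick f)) {d : ℕ} {τ : Finset ι}
    (v : ι) {x : Chains A V d} (hx : x ∈ chainsIn R A V (⋃ i ∈ τ, Γ i) d) :
    pickPart pick d v x ∈ chainsIn R A V (⋃ i ∈ τ.erase v, Γ i) d := by
  intro s hs
  change s ∈ (x.filter fun s => pick s.1 = v).support at hs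
  rw [Finsupp.support_filter, Finset.mem_filter] at hs
  obtain ⟨j, hj, hsj⟩ := Set.mem_iUnion₂.1 (hx hs.1)
  refine Set.mem_iUnion₂.2 ⟨j, Finset.mem_erase.2 ⟨?_, hj⟩, hsj⟩
  rintro rfl
  exact hpick s (hs.2 ▸ hsj)

variable [Fintype ι]

theorem sum_pickPart (d : ℕ) (x : Chains A V d) : ∑ v, pickPart pick d v x = x := by
  ext s
  rw [Finsupp.finsetSum_apply]
  change ∑ v, (x.filter fun s => pick s.1 = v) s = x s
  simp [Finsupp.filter_apply]

variable {pick}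

theorem cechHomotopy_pickPart_mem (hpick : ∀ f, f ∉ Γ (pick f)) {d : ℕ}
    {c : Finset ι → Chains A V d} {σ : Finset ι}
    (hc : ∀ v ∈ σ, c (σ.erase v) ∈ chainsIn R A V (⋃ i ∈ (σ.erase v)ᶜ, Γ i) d) :
    cechHomotopy (pickPart pick d) c σ ∈ chainsIn R A V (⋃ i ∈ σᶜ, Γ i) d := by
  refine sum_mem fun v hv => zsmul_mem ?_ _
  have h := pickPart_mem hpick v (hc v hv)
  rwa [Finset.compl_erase, Finset.erase_insert (Finset.notMem_compl.2 hv)] at h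

theorem exists_cech_eq_sub_bdry (hΓ : ∀ i, IsComplex (Γ i)) (hpick : ∀ f, f ∉ Γ (pick f))
    {c : (d : ℕ) → Finset ι → Chains A V d}
    (hc : ∀ d σ, #σ + d + 1 = Fintype.card ι → c d σ ∈ chainsIn R A V (⋃ i ∈ σᶜ, Γ i) d)
    (hbc : ∀ d σ, #σ + d + 2 = Fintype.card ι → bdry R A V d (c (d + 1) σ) = cech (c d) σ)
    (j : ℕ) : ∀ d, j + d + 1 = Fintype.card ι →
      ∃ (Y : Finset ι → Chains A V d) (Y' : Finset ι → Chains A V (d + 1)),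
        (∀ σ, #σ = j + 1 → Y σ ∈ chainsIn R A V (⋃ i ∈ σᶜ, Γ i) d) ∧
        ∀ σ, #σ = j → cech Y σ = c d σ - bdry R A V d (Y' σ) := by
  induction j with
  | zero =>
    intro d hd
    refine ⟨cechHomotopy (pickPart pick d) (c d), 0, fun σ hσ => ?_, fun σ hσ => ?_⟩
    · refine cechHomotopy_pickPart_mem hpick fun v hv => hc d _ ?_
      rw [Finset.card_erase_of_mem hv]
      omega
    · rw [Finset.card_eq_zero.1 hσ, Pi.zero_apply, map_zero, sub_zero]
      exact cech_cechHomotopy _ (sum_pickPart pick d) (by simp)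
  | succ j ih =>
    intro d hd
    obtain ⟨Y, Y', hY, hYY'⟩ := ih (d + 1) (by omega)
    refine ⟨cechHomotopy (pickPart pick d) fun σ => c d σ - bdry R A V d (Y σ), Y,
      fun σ hσ => cechHomotopy_pickPart_mem hpick fun v hv => ?_,
      fun σ hσ => cech_cechHomotopy _ (sum_pickPart pick d) fun v hv => ?_⟩
    · have hv : #(σ.erase v) = j + 1 := by rw [Finset.card_erase_of_mem hv]; omega
      exact sub_mem (hc d _ (by omega)) (bdry_mem_chainsIn (IsComplex.biUnion hΓ _) (hY _ hv))
    · have hv : #(σ.erase v) = j := by rw [Finset.card_erase_of_mem hv]; omega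
      rw [cech_sub, ← map_cech, hYY' _ hv, ← hbc d _ (by omega), map_sub, bdry_bdry, sub_zero,
        sub_self]

end Descent

section Helly

variable {R A V}

theorem iInter_nonempty_of_redHVanish [Nontrivial A] {ι : Type*} [Fintype ι]
    {Γ : ι → Set (Finset V)} (hΓ : ∀ i, IsComplex (Γ i)) {k : ℤ} (hk : k + 1 ≤ Fintype.card ι)
    (h1 : ∀ τ : Finset ι, τ.Nonempty → RedHVanish R A V (⋂ i ∈ τ, Γ i) (k - #τ))
    (h2 : ∀ ρ : Finset ι, k + 2 ≤ #ρ → RedHVanish R A V (⋃ i ∈ ρ, Γ i) (#ρ - 2)) :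
    (⋂ i, Γ i).Nonempty := by
  let : LinearOrder ι := LinearOrder.lift' _ (Fintype.equivFin ι).injective
  rcases isEmpty_or_nonempty ι with hι | ⟨⟨i₀⟩⟩
  · simp [Set.iInter_of_empty]
  have hn : 0 < Fintype.card ι := Fintype.card_pos_iff.2 ⟨i₀⟩
  by_contra hempty
  have hpick : ∀ f, ∃ i, f ∉ Γ i := by
    simpa [Set.not_nonempty_iff_eq_empty, Set.eq_empty_iff_forall_notMem] using hempty
  choose pick hpick using hpick
  obtain ⟨a, ha⟩ := exists_ne (0 : A)
  obtain ⟨c, hcN, hc₀, hbc⟩ := exists_zigzag (mixedPiece_insert_subset Γ _)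
    (fun σ => IsComplex.biInter_inter hΓ (IsComplex.biUnion hΓ _) _)
    (redHVanish_mixedPiece hΓ hk h1 h2) a
  obtain ⟨Y, Y', hY, hYc⟩ := exists_cech_eq_sub_bdry hΓ hpick
    (fun d σ hσ => chainsIn_mono Set.inter_subset_right (hcN d σ hσ)) hbc
    (Fintype.card ι - 1) 0 (by omega)
  have hcard : #(Finset.univ.erase i₀) + 1 = Fintype.card ι := by
    rw [Finset.card_erase_of_mem (Finset.mem_univ i₀), Finset.card_univ]
    omega
  have hY_univ : Y Finset.univ = 0 := by
    have h := hY Finset.univ (by rw [Finset.card_univ]; omega)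
    simpa only [Finset.compl_univ, Finset.notMem_empty, Set.iUnion_of_empty, Set.iUnion_empty,
      chainsIn_empty, Submodule.mem_bot] using h
  have h := congrArg (aug R A V) (hYc (Finset.univ.erase i₀) (by omega))
  rw [cech_univ_erase, hY_univ, smul_zero, map_zero, map_sub, aug_bdry, sub_zero, hc₀ _ hcard,
    cech_univ_erase] at h
  apply ha
  rw [← one_smul ℤ a, ← insertSign_mul_self (Finset.univ.erase i₀) i₀, mul_smul, ← h, smul_zero]

end Helly

theorem homological_helly_mixed_general {V ι : Type*} [LinearOrder V] [Fintype ι]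
    (F : Type*) [Field F]
    (X : Set (Finset V))
    (Γ : ι → Set (Finset V)) (hΓ : ∀ i, IsComplex (Γ i) ∧ Γ i ⊆ X)
    (k : ℤ) (hk2 : k ≤ (Fintype.card ι : ℤ) - 2)
    (h1 : ∀ Γ' : Finset ι, 1 ≤ Γ'.card → (Γ'.card : ℤ) ≤ k + 1 →
      RedHVanish F F V (⋂ i ∈ Γ', Γ i) (k - Γ'.card))
    (h2 : ∀ Γ' : Finset ι, k + 2 ≤ (Γ'.card : ℤ) →
      RedHVanish F F V (⋃ i ∈ Γ', Γ i) ((Γ'.card : ℤ) - 2)) :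
    (⋂ i, Γ i).Nonempty := by
  refine iInter_nonempty_of_redHVanish (fun i => (hΓ i).1) (by omega) (fun τ hτ => ?_) h2
  by_cases hτk : (#τ : ℤ) ≤ k + 1
  · exact h1 τ hτ.card_pos hτk
  · exact redHVanish_of_lt (by omega)

/-- Homological Helly-type theorem mixing intersection and union conditions. -/
theorem homological_helly_mixed {V ι : Type*} [LinearOrder V] [Fintype ι]
    (F : Type*) [Field F]
    (X : Set (Finset V)) (hX : IsComplex X)
    (Γ : ι → Set (Finset V)) (hΓ : ∀ i, IsComplex (Γ i) ∧ Γ i ⊆ X)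
    (k : ℤ) (hk1 : -1 ≤ k) (hk2 : k ≤ (Fintype.card ι : ℤ) - 2)
    (h1 : ∀ Γ' : Finset ι, 1 ≤ Γ'.card → (Γ'.card : ℤ) ≤ k + 1 →
      RedHVanish F F V (⋂ i ∈ Γ', Γ i) (k - Γ'.card))
    (h2 : ∀ Γ' : Finset ι, k + 2 ≤ (Γ'.card : ℤ) →
      RedHVanish F F V (⋃ i ∈ Γ', Γ i) ((Γ'.card : ℤ) - 2)) :
    (⋂ i, Γ i).Nonempty :=
  homological_helly_mixed_general F X Γ hΓ k hk2 h1 h2
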